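/- Let d ≥ 2 be an integer, let v₁, v₂ ∈ ℝ^d with r := |v₁ − v₂| > 0, and define J : ℝ^d → ℝ^d by J(ω) = r^{-1}((v₁ − v₂) + 2⟨ω, v₂ − v₁⟩ω), so that J(ω) = r^{-1}(v₁' − v₂') with (v₁', v₂') = T_ω(v₁, v₂). Let S⁺ = {ω ∈ 𝕊₁^{d-1} : ⟨ω, v₂ − v₁⟩ > 0}. Then J restricted to S⁺ is a bijection from S⁺ onto 𝕊₁^{d-1} \ {r^{-1}(v₁ − v₂)}. -/

import Mathlib

/-! Put `e = r⁻¹ (v₁ − v₂)`. For a unit vector `ω`, `J(ω) = e − 2⟨ω, e⟩ω` is the mirror image of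
`e` in the hyperplane `ω^⊥`, so `J` maps the unit sphere to itself, and it never returns `e` when
`⟨ω, e⟩ ≠ 0`. Conversely, the reflections taking `e` to a unit vector `σ ≠ e` are exactly those in
`(σ − e)^⊥`, which determines `ω` up to sign; the sign is fixed by `⟨ω, e⟩ < 0`, i.e. by
`⟨ω, v₂ − v₁⟩ > 0`. -/

open MeasureTheory

/-- The binary transition map `J(ω) = r⁻¹ (v₁' − v₂') = r⁻¹ ((v₁ − v₂) + 2⟨ω, v₂ − v₁⟩ ω)`,
where `r = |v₁ − v₂|`. -/
noncomputable def transJ {d : ℕ} (v₁ v₂ : EuclideanSpace ℝ (Fin d)) :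
    EuclideanSpace ℝ (Fin d) → EuclideanSpace ℝ (Fin d) :=
  fun ω => ‖v₁ - v₂‖⁻¹ • ((v₁ - v₂) + (2 * (inner ℝ ω (v₂ - v₁) : ℝ)) • ω)

open Metric Submodule
open scoped RealInnerProductSpace

section Hemisphere

variable {E : Type*} [NormedAddCommGroup E] [InnerProductSpace ℝ E]

theorem reflection_orthogonalComplement_singleton_apply_of_norm_eq_one {ω : E} (hω : ‖ω‖ = 1)
    (x : E) :
    reflection (ℝ ∙ ω)ᗮ x = x - (2 * ⟪ω, x⟫) • ω := by
  rw [reflection_orthogonal_apply, reflection_singleton_apply, hω]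
  simp only [RCLike.ofReal_real_eq_id, id, one_pow, div_one]
  module

theorem bijOn_reflection_hemisphere {e : E} (he : ‖e‖ = 1) :
    Set.BijOn (fun ω => reflection (ℝ ∙ ω)ᗮ e) {ω | ω ∈ sphere 0 1 ∧ ⟪ω, e⟫ < 0}
      (sphere 0 1 \ {e}) := by
  refine ⟨?_, ?_, ?_⟩
  · rintro ω ⟨hω, hωe⟩
    rw [mem_sphere_zero_iff_norm] at hω
    refine ⟨by simp [he], fun hfix => ?_⟩
    rw [Set.mem_singleton_iff, reflection_eq_self_iff, mem_orthogonal_singleton_iff_inner_right]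
      at hfix
    exact hωe.ne hfix
  · rintro ω ⟨hω, hωe⟩ ω' ⟨hω', hω'e⟩ heq
    rw [mem_sphere_zero_iff_norm] at hω hω'
    have hsmul : (2 * ⟪ω, e⟫) • ω = (2 * ⟪ω', e⟫) • ω' := by
      simpa [reflection_orthogonalComplement_singleton_apply_of_norm_eq_one, hω, hω'] using heq
    have hcoeff : 2 * ⟪ω, e⟫ = 2 * ⟪ω', e⟫ := by
      have := congrArg norm hsmul
      rw [norm_smul, norm_smul, hω, hω', Real.norm_of_nonpos (by linarith),
        Real.norm_of_nonpos (by linarith)] at this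
      linarith
    rw [hcoeff] at hsmul
    exact smul_right_injective E (by linarith) hsmul
  · rintro σ ⟨hσ, hσe⟩
    rw [mem_sphere_zero_iff_norm] at hσ
    have hne : e - σ ≠ 0 := sub_ne_zero.mpr (Ne.symm hσe)
    have hr : 0 < ‖e - σ‖ := norm_pos_iff.mpr hne
    refine ⟨-‖e - σ‖⁻¹ • (e - σ), ⟨?_, ?_⟩, ?_⟩
    · simp [norm_smul, hr.ne']
    · have : ⟪σ, e⟫ < 1 := (inner_lt_one_iff_real_of_norm_eq_one hσ he).mpr hσe
      rw [real_inner_smul_left, inner_sub_left, real_inner_self_eq_norm_sq, he]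
      exact mul_neg_of_neg_of_pos (by simpa using hr) (by linarith)
    · have hunit : IsUnit (-‖e - σ‖⁻¹) := by simpa using hr.ne'
      simpa only [span_singleton_smul_eq hunit] using reflection_sub (he.trans hσ.symm)

end Hemisphere

theorem transJ_apply {d : ℕ} {v₁ v₂ : EuclideanSpace ℝ (Fin d)} (hne : v₁ ≠ v₂)
    (ω : EuclideanSpace ℝ (Fin d)) :
    transJ v₁ v₂ ω = ‖v₁ - v₂‖⁻¹ • (v₁ - v₂) - (2 * ⟪ω, ‖v₁ - v₂‖⁻¹ • (v₁ - v₂)⟫) • ω := by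
  have hr : ‖v₁ - v₂‖ ≠ 0 := norm_ne_zero_iff.mpr (sub_ne_zero.mpr hne)
  rw [transJ, real_inner_smul_right, ← neg_sub v₁ v₂, inner_neg_right]
  match_scalars <;> field_simp

theorem stmt_17_general (d : ℕ) (v₁ v₂ : EuclideanSpace ℝ (Fin d)) (hne : v₁ ≠ v₂) :
    Set.BijOn (transJ v₁ v₂)
      {ω : EuclideanSpace ℝ (Fin d) |
        ω ∈ Metric.sphere (0 : EuclideanSpace ℝ (Fin d)) 1 ∧ 0 < (inner ℝ ω (v₂ - v₁) : ℝ)}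
      (Metric.sphere (0 : EuclideanSpace ℝ (Fin d)) 1 \ {‖v₁ - v₂‖⁻¹ • (v₁ - v₂)}) := by
  have hr : 0 < ‖v₁ - v₂‖ := norm_pos_iff.mpr (sub_ne_zero.mpr hne)
  set e := ‖v₁ - v₂‖⁻¹ • (v₁ - v₂)
  have he : ‖e‖ = 1 := norm_smul_inv_norm (𝕜 := ℝ) (sub_ne_zero.mpr hne)
  have hsource : {ω : EuclideanSpace ℝ (Fin d) | ω ∈ sphere 0 1 ∧ 0 < ⟪ω, v₂ - v₁⟫} =
      {ω | ω ∈ sphere 0 1 ∧ ⟪ω, e⟫ < 0} := by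
    refine Set.ext fun ω => and_congr_right fun _ => ?_
    rw [real_inner_smul_right, ← neg_sub v₁ v₂, inner_neg_right,
      ← mul_pos_iff_of_pos_left (inv_pos.mpr hr), mul_neg, neg_pos]
  rw [hsource]
  exact (bijOn_reflection_hemisphere he).congr fun ω hω =>
    (reflection_orthogonalComplement_singleton_apply_of_norm_eq_one
      (mem_sphere_zero_iff_norm.mp hω.1) e).trans (transJ_apply hne ω).symm

theorem stmt_17 (d : ℕ) (hd : 2 ≤ d) (v₁ v₂ : EuclideanSpace ℝ (Fin d)) (hne : v₁ ≠ v₂) :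
    Set.BijOn (transJ v₁ v₂)
      {ω : EuclideanSpace ℝ (Fin d) |
        ω ∈ Metric.sphere (0 : EuclideanSpace ℝ (Fin d)) 1 ∧ 0 < (inner ℝ ω (v₂ - v₁) : ℝ)}
      (Metric.sphere (0 : EuclideanSpace ℝ (Fin d)) 1 \ {‖v₁ - v₂‖⁻¹ • (v₁ - v₂)}) :=
  stmt_17_general d v₁ v₂ hne
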